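/- arXiv:1410.1803 — 4 statements merged into one kernel-verified Lean document; each statement's English description precedes it below -/
import Mathlib

section
/- (Gale–Ryser) A bipartite graph G = (A ∪ B, E) with |A| = |B| contains an r-factor (a spanning r-regular subgraph) if and only if for all X ⊆ A and Y ⊆ B, the number of edges between X and Y satisfies e_G(X,Y) ≥ r(|X| + |Y| − |B|). -/
/-!
Reduce to Hall's theorem on an auxiliary bipartite graph. Its left side consists of `r` copies
`(a, i)` of every `a ∈ A` and of all pairs `e ∈ A × B`, its right side of all pairs `e` and of `r`
copies `(b, j)` of every `b ∈ B`. A copy `(a, i)` is adjacent to the edges of `E` at `a`; a pair `e`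
is adjacent to itself and, if `e ∈ E`, to the copies of its end `e.2`. For a set of copies over
`X ⊆ A` and of pairs whose edges end in `Y ⊆ B`, Hall's condition is the hypothesis for `X` and
`B \ Y`. Given a matching saturating the left side, let `F` be the edges not matched to themselves.
Every `b` lies on at most `r` of them, since they are matched to copies of `b`. Every copy `(a, i)`
is matched to an edge at `a` that is then not matched to itself, so `a` lies on at least `r` of
them. As `|A| = |B|`, double counting forces equality everywhere.
-/

open Finset Function

namespace GaleRyser

theorem card_filter_mem_eq_mul {α β : Type*} [DecidableEq β] {F : Finset α} {f : α → β}
    {r : ℕ} (hF : ∀ b, #{x ∈ F | f x = b} = r) (X : Finset β) :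
    #{x ∈ F | f x ∈ X} = #X * r := by
  rw [card_eq_sum_card_fiberwise (f := f) (s := {x ∈ F | f x ∈ X}) (t := X)
    fun x hx => (mem_filter.1 hx).2, ← smul_eq_mul, ← sum_const]
  refine sum_congr rfl fun b hb => ?_
  rw [filter_filter, ← hF b]
  congr 1
  exact filter_congr fun x _ => ⟨And.right, fun hx => ⟨hx ▸ hb, hx⟩⟩

section Regular

variable {A B : Type*} [DecidableEq A] [DecidableEq B] {F : Finset (A × B)} {r : ℕ}

theorem le_card_filter_of_regular [Fintype B] (hA : ∀ a, #{e ∈ F | e.1 = a} = r)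
    (hB : ∀ b, #{e ∈ F | e.2 = b} = r) (X : Finset A) (Y : Finset B) :
    (r : ℤ) * (#X + #Y - Fintype.card B) ≤ #{e ∈ F | e.1 ∈ X ∧ e.2 ∈ Y} := by
  have hX := card_filter_mem_eq_mul hA X
  have hYc := card_filter_mem_eq_mul hB Yᶜ
  have hsplit : #{e ∈ F | e.1 ∈ X ∧ e.2 ∈ Y} + #{e ∈ F | e.1 ∈ X ∧ e.2 ∉ Y} =
      #{e ∈ F | e.1 ∈ X} := by
    rw [← filter_filter, ← filter_filter, card_filter_add_card_filter_not]
  have hout : #{e ∈ F | e.1 ∈ X ∧ e.2 ∉ Y} ≤ #{e ∈ F | e.2 ∈ Yᶜ} :=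
    card_le_card <| monotone_filter_right _ fun e _ he => mem_compl.2 he.2
  have hY : #Yᶜ + #Y = Fintype.card B := card_compl_add_card Y
  zify at hX hYc hsplit hout hY
  nlinarith

theorem regular_of_le_of_le [Fintype A] [Fintype B] (hcard : Fintype.card A = Fintype.card B)
    (hA : ∀ a, r ≤ #{e ∈ F | e.1 = a}) (hB : ∀ b, #{e ∈ F | e.2 = b} ≤ r) :
    (∀ a, #{e ∈ F | e.1 = a} = r) ∧ (∀ b, #{e ∈ F | e.2 = b} = r) := by
  have hsumA : #F = ∑ a, #{e ∈ F | e.1 = a} :=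
    card_eq_sum_card_fiberwise fun _ _ => mem_coe.2 (mem_univ _)
  have hsumB : #F = ∑ b, #{e ∈ F | e.2 = b} :=
    card_eq_sum_card_fiberwise fun _ _ => mem_coe.2 (mem_univ _)
  have hconst : ∑ _a : A, r = ∑ _b : B, r := by simp [hcard]
  have hB' := sum_le_sum fun b (_ : b ∈ univ) => hB b
  have hA' := sum_le_sum fun a (_ : a ∈ univ) => hA a
  constructor
  · intro a
    refine ((sum_eq_sum_iff_of_le fun a _ => hA a).1 ?_ a (mem_univ a)).symm
    omega
  · intro b
    refine (sum_eq_sum_iff_of_le fun b _ => hB b).1 ?_ b (mem_univ b)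
    omega

end Regular

variable {A B : Type*} {E : Finset (A × B)} {r : ℕ}

variable (E r) in
def gadgetAdj : (A × Fin r) ⊕ (A × B) → (A × B) ⊕ (B × Fin r) → Prop
  | .inl (a, _), .inl e => e ∈ E ∧ e.1 = a
  | .inl _, .inr _ => False
  | .inr e, .inl e' => e' = e
  | .inr e, .inr (b, _) => e ∈ E ∧ e.2 = b

variable {f : (A × Fin r) ⊕ (A × B) → (A × B) ⊕ (B × Fin r)}

variable (E f) in
def matchedEdges : Finset (A × B) := {e ∈ E | (f (.inr e)).isRight}

theorem mem_matchedEdges_of_apply_inl (hf : Injective f) (hadj : ∀ x, gadgetAdj E r x (f x))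
    {c : A × Fin r} {e : A × B} (hc : f (.inl c) = .inl e) : e ∈ matchedEdges E f := by
  have hce := hadj (.inl c)
  rw [hc] at hce
  refine mem_filter.2 ⟨hce.1, ?_⟩
  cases he : f (.inr e) with
  | inl e' =>
    have he' := hadj (.inr e)
    rw [he] at he'
    subst he'
    exact absurd (hf (he.trans hc.symm)) Sum.inr_ne_inl
  | inr _ => rfl

variable [DecidableEq A] [DecidableEq B]

instance : DecidableRel (gadgetAdj E r)
  | .inl (a, _), .inl e => inferInstanceAs (Decidable (e ∈ E ∧ e.1 = a))
  | .inl _, .inr _ => inferInstanceAs (Decidable False)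
  | .inr e, .inl e' => inferInstanceAs (Decidable (e' = e))
  | .inr e, .inr (b, _) => inferInstanceAs (Decidable (e ∈ E ∧ e.2 = b))

theorem card_le_card_gadgetAdj_image [Fintype A] [Fintype B]
    (h : ∀ (X : Finset A) (Y : Finset B),
      (r : ℤ) * (#X + #Y - Fintype.card B) ≤ #{e ∈ E | e.1 ∈ X ∧ e.2 ∈ Y})
    (s : Finset ((A × Fin r) ⊕ (A × B))) :
    #s ≤ #{y | ∃ x ∈ s, gadgetAdj E r x y} := by
  set N : Finset ((A × B) ⊕ (B × Fin r)) := {y | ∃ x ∈ s, gadgetAdj E r x y}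
  set X : Finset A := s.toLeft.image Prod.fst
  set Y : Finset B := {e ∈ s.toRight | e ∈ E}.image Prod.snd
  have hsX : #s.toLeft ≤ #X * r := by
    calc #s.toLeft ≤ #(X ×ˢ (univ : Finset (Fin r))) :=
          card_le_card fun x hx => mem_product.2 ⟨mem_image_of_mem _ hx, mem_univ _⟩
      _ = #X * r := by rw [card_product, card_univ, Fintype.card_fin]
  have hNleft : s.toRight ∪ {e ∈ E | e.1 ∈ X ∧ e.2 ∈ Yᶜ} ⊆ N.toLeft := by
    intro e he
    rw [mem_toLeft, mem_filter]
    refine ⟨mem_univ _, ?_⟩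
    rcases mem_union.1 he with hs | hE
    · exact ⟨.inr e, mem_toRight.1 hs, rfl⟩
    · obtain ⟨heE, hX, -⟩ := mem_filter.1 hE
      obtain ⟨⟨a, i⟩, hai, ha⟩ := mem_image.1 hX
      exact ⟨.inl (a, i), mem_toLeft.1 hai, heE, ha.symm⟩
  have hdisj : Disjoint s.toRight {e ∈ E | e.1 ∈ X ∧ e.2 ∈ Yᶜ} := by
    refine disjoint_left.2 fun e hs hE => ?_
    obtain ⟨heE, -, hY⟩ := mem_filter.1 hE
    exact mem_compl.1 hY (mem_image_of_mem _ (mem_filter.2 ⟨hs, heE⟩))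
  have hNright : Y ×ˢ (univ : Finset (Fin r)) ⊆ N.toRight := by
    rintro ⟨b, j⟩ hb
    obtain ⟨e, he, rfl⟩ := mem_image.1 (mem_product.1 hb).1
    obtain ⟨hs, heE⟩ := mem_filter.1 he
    rw [mem_toRight, mem_filter]
    exact ⟨mem_univ _, .inr e, mem_toRight.1 hs, heE, rfl⟩
  have hleft := card_le_card hNleft
  rw [card_union_of_disjoint hdisj] at hleft
  have hright := card_le_card hNright
  rw [card_product, card_univ, Fintype.card_fin] at hright
  have hs := card_toLeft_add_card_toRight (u := s)
  have hN := card_toLeft_add_card_toRight (u := N)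
  have hY : #Yᶜ + #Y = Fintype.card B := card_compl_add_card Y
  have hXY := h X Yᶜ
  zify at hsX hleft hright hs hN hY
  nlinarith

theorem le_card_matchedEdges_filter_fst (hf : Injective f) (hadj : ∀ x, gadgetAdj E r x (f x))
    (a : A) : r ≤ #{e ∈ matchedEdges E f | e.1 = a} := by
  calc r = #(univ.image fun i : Fin r => f (.inl (a, i))) := by
        rw [card_image_of_injective _ fun i j hij => by simpa using hf hij, card_univ,
          Fintype.card_fin]
    _ ≤ #({e ∈ matchedEdges E f | e.1 = a}.map .inl) := card_le_card ?_
    _ = #{e ∈ matchedEdges E f | e.1 = a} := card_map _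
  intro y hy
  obtain ⟨i, -, rfl⟩ := mem_image.1 hy
  have hadj' := hadj (.inl (a, i))
  cases hc : f (.inl (a, i)) with
  | inl e =>
    rw [hc] at hadj'
    exact mem_map_of_mem _ (mem_filter.2 ⟨mem_matchedEdges_of_apply_inl hf hadj hc, hadj'.2⟩)
  | inr _ =>
    rw [hc] at hadj'
    exact hadj'.elim

theorem card_matchedEdges_filter_snd_le (hf : Injective f) (hadj : ∀ x, gadgetAdj E r x (f x))
    (b : B) : #{e ∈ matchedEdges E f | e.2 = b} ≤ r := by
  calc #{e ∈ matchedEdges E f | e.2 = b}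
        = #({e ∈ matchedEdges E f | e.2 = b}.image fun e => f (.inr e)) :=
          (card_image_of_injective _ (hf.comp Sum.inr_injective)).symm
    _ ≤ #(univ.image fun j : Fin r => (.inr (b, j) : (A × B) ⊕ (B × Fin r))) := card_le_card ?_
    _ ≤ r := card_image_le.trans (by rw [card_univ, Fintype.card_fin])
  intro y hy
  obtain ⟨e, he, rfl⟩ := mem_image.1 hy
  obtain ⟨heF, rfl⟩ := mem_filter.1 he
  have hisRight := (mem_filter.1 heF).2
  have hadj' := hadj (.inr e)
  cases hc : f (.inr e) with
  | inl _ => simp [hc] at hisRight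
  | inr q =>
    rw [hc] at hadj'
    exact mem_image.2 ⟨q.2, mem_univ _, by rw [hadj'.2]⟩

end GaleRyser

open GaleRyser

/-- Gale–Ryser: a bipartite graph `E ⊆ A × B` with `|A| = |B|` contains an `r`-factor
(a spanning subgraph that is `r`-regular on both sides) if and only if for all
`X ⊆ A`, `Y ⊆ B` we have `e(X,Y) ≥ r(|X| + |Y| − |B|)`. -/
theorem stmt2 {A B : Type*} [Fintype A] [Fintype B] [DecidableEq A] [DecidableEq B]
    (r : ℕ) (E : Finset (A × B)) (hcard : Fintype.card A = Fintype.card B) :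
    (∃ F : Finset (A × B), F ⊆ E ∧
        (∀ a : A, (F.filter (fun e => e.1 = a)).card = r) ∧
        (∀ b : B, (F.filter (fun e => e.2 = b)).card = r)) ↔
      (∀ (X : Finset A) (Y : Finset B),
        (r : ℤ) * ((X.card : ℤ) + (Y.card : ℤ) - (Fintype.card B : ℤ)) ≤
          ((E.filter (fun e => e.1 ∈ X ∧ e.2 ∈ Y)).card : ℤ)) := by
  constructor
  · rintro ⟨F, hFE, hA, hB⟩ X Y
    exact (le_card_filter_of_regular hA hB X Y).trans
      (mod_cast card_le_card (filter_subset_filter _ hFE))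
  · intro h
    obtain ⟨f, hf, hadj⟩ := (Fintype.all_card_le_filter_rel_iff_exists_injective
      (gadgetAdj E r)).1 (card_le_card_gadgetAdj_image h)
    exact ⟨matchedEdges E f, filter_subset _ _,
      regular_of_le_of_le hcard
        (le_card_matchedEdges_filter_fst hf hadj)
        (card_matchedEdges_filter_snd_le hf hadj)⟩
end

section
/- If a bipartite graph G with parts A, B of equal size n satisfies e_G(X,Y) ≥ r(|X| + |Y| − n) for all X ⊆ A and Y ⊆ B, then G contains r pairwise edge-disjoint perfect matchings. -/
/-!
Tutte's gadget turns an `r`-factor into a matching: Hall's condition for the gadget is the cut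
condition applied to `X` and the complement of `Y`, and a matching saturating its left side selects
at least `r` edges at every vertex of `A` and at most `r` at every vertex of `B`, hence exactly `r`
at each since `|A| = |B|`. An `r`-factor satisfies the cut condition with `1` in place of `r`, so
it contains a perfect matching, whose removal leaves an `(r - 1)`-factor; induction on `r` gives
the matchings.
-/

open Finset Function

namespace BipartiteFactor

variable {A B : Type*}

section

variable [DecidableEq A]

def degLeft (H : Finset (A × B)) (a : A) : ℕ := #(H.filter (fun e => e.1 = a))

lemma sum_degLeft (H : Finset (A × B)) (X : Finset A) :
    ∑ a ∈ X, degLeft H a = #(H.filter (fun e => e.1 ∈ X)) := by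
  rw [card_eq_sum_card_fiberwise (f := Prod.fst) (s := H.filter (fun e => e.1 ∈ X))
    fun e he => (mem_filter.1 he).2]
  refine sum_congr rfl fun a ha => ?_
  rw [degLeft, filter_filter]
  exact congrArg card (filter_congr fun e _ => ⟨fun h => ⟨h ▸ ha, h⟩, And.right⟩)

end

section

variable [DecidableEq B]

def degRight (H : Finset (A × B)) (b : B) : ℕ := #(H.filter (fun e => e.2 = b))

lemma sum_degRight (H : Finset (A × B)) (Y : Finset B) :
    ∑ b ∈ Y, degRight H b = #(H.filter (fun e => e.2 ∈ Y)) := by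
  rw [card_eq_sum_card_fiberwise (f := Prod.snd) (s := H.filter (fun e => e.2 ∈ Y))
    fun e he => (mem_filter.1 he).2]
  refine sum_congr rfl fun b hb => ?_
  rw [degRight, filter_filter]
  exact congrArg card (filter_congr fun e _ => ⟨fun h => ⟨h ▸ hb, h⟩, And.right⟩)

end

variable [DecidableEq A] [DecidableEq B] {n r : ℕ}

def IsBiregular (H : Finset (A × B)) (r : ℕ) : Prop :=
  (∀ a, degLeft H a = r) ∧ ∀ b, degRight H b = r

def CutCondition (E : Finset (A × B)) (n r : ℕ) : Prop :=
  ∀ (X : Finset A) (Y : Finset B),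
    (r : ℤ) * ((#X : ℤ) + (#Y : ℤ) - (n : ℤ)) ≤
      (#(E.filter (fun e => e.1 ∈ X ∧ e.2 ∈ Y)) : ℤ)

lemma CutCondition.mono {E : Finset (A × B)} {k : ℕ} (hE : CutCondition E n r) (hkr : k ≤ r) :
    CutCondition E n k := by
  intro X Y
  rcases le_or_gt ((#X : ℤ) + #Y - n) 0 with hneg | hpos
  · exact (mul_nonpos_of_nonneg_of_nonpos (by positivity) hneg).trans (by positivity)
  · exact (mul_le_mul_of_nonneg_right (by exact_mod_cast hkr) hpos.le).trans (hE X Y)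

lemma IsBiregular.sdiff {H M : Finset (A × B)} {k : ℕ} (hH : IsBiregular H (r + k))
    (hM : IsBiregular M k) (hMH : M ⊆ H) : IsBiregular (H \ M) r := by
  have hcard : ∀ (p : A × B → Prop) [DecidablePred p],
      #((H \ M).filter p) + #(M.filter p) = #(H.filter p) := fun p _ => by
    have hdiff : (H \ M).filter p = H.filter p \ M.filter p := by
      ext e; simp only [mem_filter, mem_sdiff]; tauto
    rw [hdiff, card_sdiff_add_card_eq_card (filter_subset_filter p hMH)]
  refine ⟨fun a => ?_, fun b => ?_⟩
  · have := hcard (fun e => e.1 = a); have := hH.1 a; have := hM.1 a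
    unfold degLeft at *; omega
  · have := hcard (fun e => e.2 = b); have := hH.2 b; have := hM.2 b
    unfold degRight at *; omega

lemma IsBiregular.cutCondition [Fintype B] {H : Finset (A × B)} (hB : Fintype.card B = n)
    (hH : IsBiregular H r) : CutCondition H n r := by
  intro X Y
  have hX : #(H.filter (fun e => e.1 ∈ X)) = r * #X := by
    rw [← sum_degLeft, sum_congr rfl fun a _ => hH.1 a, sum_const, smul_eq_mul, mul_comm]
  have hYc : #(H.filter (fun e => e.2 ∈ Yᶜ)) = r * (n - #Y) := by
    rw [← sum_degRight, sum_congr rfl fun b _ => hH.2 b, sum_const, smul_eq_mul, mul_comm,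
      card_compl, hB]
  have hsplit : #(H.filter (fun e => e.1 ∈ X)) ≤
      #(H.filter (fun e => e.1 ∈ X ∧ e.2 ∈ Y)) + #(H.filter (fun e => e.2 ∈ Yᶜ)) := by
    refine (card_le_card fun e he => ?_).trans (card_union_le _ _)
    by_cases hY : e.2 ∈ Y <;> simp_all
  have hYn : #Y ≤ n := hB ▸ card_le_univ Y
  rw [hX, hYc] at hsplit
  zify [hYn] at hsplit
  linarith

lemma isBiregular_of_le_degLeft_of_degRight_le [Fintype A] [Fintype B]
    (hcard : Fintype.card A = Fintype.card B) {H : Finset (A × B)}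
    (hA : ∀ a, r ≤ degLeft H a) (hB : ∀ b, degRight H b ≤ r) : IsBiregular H r := by
  have hsumA : ∑ a, degLeft H a = #H := by simpa using sum_degLeft H univ
  have hsumB : ∑ b, degRight H b = #H := by simpa using sum_degRight H univ
  have hconst : ∑ _a : A, r = ∑ _b : B, r := by simp [hcard]
  have hle : ∑ _a : A, r ≤ ∑ a, degLeft H a := sum_le_sum fun a _ => hA a
  have hge : ∑ b, degRight H b ≤ ∑ _b : B, r := sum_le_sum fun b _ => hB b
  have hA' := (sum_eq_sum_iff_of_le (s := univ) fun a _ => hA a).1 (by omega)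
  have hB' := (sum_eq_sum_iff_of_le (s := univ) fun b _ => hB b).1 (by omega)
  exact ⟨fun a => (hA' a (mem_univ a)).symm, fun b => hB' b (mem_univ b)⟩

/- Left nodes: `r` copies `(a, i)` of each `a ∈ A` and one node per pair `e`; right nodes: one
port per pair `e` and `r` copies `(b, j)` of each `b ∈ B`. A copy of `a` sees the ports of the
edges at `a`; the node of `e` sees its own port and, if `e ∈ E`, the copies of `e.2`. The edge `e`
is selected when its node is not matched to its own port (`gadgetFactor`). -/
def tutteGadget (E : Finset (A × B)) (r : ℕ) :
    (A × Fin r) ⊕ (A × B) → Finset ((A × B) ⊕ (B × Fin r))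
  | .inl (a, _) => (E.filter (fun e => e.1 = a)).image .inl
  | .inr e => insert (.inl e) (if e ∈ E then univ.image (fun j => .inr (e.2, j)) else ∅)

lemma CutCondition.mul_card_le [Fintype B] {E : Finset (A × B)} (hB : Fintype.card B = n)
    (hE : CutCondition E n r) (X : Finset A) (Y : Finset B) :
    r * #X ≤ #(E.filter (fun e => e.1 ∈ X ∧ e.2 ∈ Yᶜ)) + r * #Y := by
  have h := hE X Yᶜ
  have hYn : #Y ≤ n := hB ▸ card_le_univ Y
  rw [card_compl, hB] at h
  push_cast [hYn] at h
  zify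
  linarith

lemma card_le_card_biUnion_tutteGadget [Fintype B] {E : Finset (A × B)}
    (hB : Fintype.card B = n) (hE : CutCondition E n r) (S : Finset ((A × Fin r) ⊕ (A × B))) :
    #S ≤ #(S.biUnion (tutteGadget E r)) := by
  set X := S.toLeft.image Prod.fst
  set T := S.toRight
  set Y := (T.filter (· ∈ E)).image Prod.snd
  set F := E.filter (fun e => e.1 ∈ X ∧ e.2 ∈ Yᶜ)
  have hleft : #S.toLeft ≤ r * #X := by
    have := card_le_card (s := S.toLeft) (t := X ×ˢ (univ : Finset (Fin r)))
      fun x hx => mem_product.2 ⟨mem_image_of_mem _ hx, mem_univ _⟩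
    simpa [mul_comm] using this
  have hcut : r * #X ≤ #F + r * #Y := hE.mul_card_le hB X Y
  have hdisj : Disjoint T F := by
    refine disjoint_left.2 fun e heT heF => ?_
    simp only [F, mem_filter, mem_compl] at heF
    exact heF.2.2 (mem_image_of_mem _ (mem_filter.2 ⟨heT, heF.1⟩))
  set P : Finset ((A × B) ⊕ (B × Fin r)) :=
    (T ∪ F).image Sum.inl ∪ (Y ×ˢ univ).image Sum.inr
  have hP : #P = #T + #F + r * #Y := by
    rw [card_union_of_disjoint (disjoint_left.2 (by simp)),
      card_image_of_injective _ Sum.inl_injective, card_image_of_injective _ Sum.inr_injective,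
      card_union_of_disjoint hdisj, card_product, card_univ, Fintype.card_fin, mul_comm]
  have hsub : P ⊆ S.biUnion (tutteGadget E r) := by
    intro x hx
    simp only [P, mem_union, mem_image, mem_product, mem_univ, and_true] at hx
    rw [mem_biUnion]
    rcases hx with ⟨e, heT | heF, rfl⟩ | ⟨⟨b, j⟩, hbY, rfl⟩
    · exact ⟨.inr e, mem_toRight.1 heT, mem_insert_self _ _⟩
    · simp only [F, X, mem_filter, mem_image, mem_toLeft] at heF
      obtain ⟨heE, ⟨⟨a, i⟩, hai, rfl⟩, -⟩ := heF
      exact ⟨.inl (e.1, i), hai, mem_image_of_mem _ (mem_filter.2 ⟨heE, rfl⟩)⟩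
    · simp only [Y, mem_image, mem_filter] at hbY
      obtain ⟨e, ⟨heT, heE⟩, rfl⟩ := hbY
      refine ⟨.inr e, mem_toRight.1 heT, mem_insert_of_mem ?_⟩
      rw [if_pos heE]
      exact mem_image_of_mem _ (mem_univ j)
  calc #S = #S.toLeft + #T := card_toLeft_add_card_toRight.symm
    _ ≤ #P := by omega
    _ ≤ _ := card_le_card hsub

def gadgetFactor (E : Finset (A × B)) (f : (A × Fin r) ⊕ (A × B) → (A × B) ⊕ (B × Fin r)) :
    Finset (A × B) :=
  E.filter (fun e => f (.inr e) ≠ .inl e)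

section GadgetMatching

variable {E : Finset (A × B)} {f : (A × Fin r) ⊕ (A × B) → (A × B) ⊕ (B × Fin r)}

lemma le_degLeft_gadgetFactor (hf : Injective f) (hft : ∀ x, f x ∈ tutteGadget E r x)
    (a : A) : r ≤ degLeft (gadgetFactor E f) a := by
  have hmaps :
      ∀ i, f (.inl (a, i)) ∈ ((gadgetFactor E f).filter (·.1 = a)).image Sum.inl := by
    intro i
    obtain ⟨e, he, hfe⟩ := mem_image.1 (hft (.inl (a, i)))
    rw [mem_filter] at he
    refine hfe ▸ mem_image_of_mem _ (mem_filter.2 ⟨mem_filter.2 ⟨he.1, fun h => ?_⟩, he.2⟩)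
    exact Sum.inr_ne_inl (hf (h.trans hfe))
  have hinj : Injective fun i : Fin r => f (.inl (a, i)) := fun i j h => by simpa using hf h
  calc r = #(univ.image fun i => f (.inl (a, i))) := by
        rw [card_image_of_injective _ hinj, card_univ, Fintype.card_fin]
    _ ≤ #(((gadgetFactor E f).filter (·.1 = a)).image Sum.inl) :=
        card_le_card fun x hx => by
          obtain ⟨i, -, rfl⟩ := mem_image.1 hx
          exact hmaps i
    _ = degLeft (gadgetFactor E f) a := card_image_of_injective _ Sum.inl_injective

lemma degRight_gadgetFactor_le (hf : Injective f) (hft : ∀ x, f x ∈ tutteGadget E r x)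
    (b : B) : degRight (gadgetFactor E f) b ≤ r := by
  set copies : Finset ((A × B) ⊕ (B × Fin r)) := univ.image fun j => .inr (b, j)
  have hmaps :
      Set.MapsTo (fun e => f (.inr e)) ((gadgetFactor E f).filter (·.2 = b)) copies := by
    intro e he
    obtain ⟨heH, rfl⟩ := mem_filter.1 he
    obtain ⟨heE, hne⟩ := mem_filter.1 heH
    have h := hft (.inr e)
    simp only [tutteGadget, if_pos heE, mem_insert, hne, false_or] at h
    exact h
  calc degRight (gadgetFactor E f) b ≤ #copies :=
        card_le_card_of_injOn _ hmaps fun e _ e' _ h => Sum.inr_injective (hf h)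
    _ ≤ r := card_image_le.trans (by simp)

end GadgetMatching

lemma exists_subset_isBiregular [Fintype A] [Fintype B] {E : Finset (A × B)}
    (hA : Fintype.card A = n) (hB : Fintype.card B = n) (hE : CutCondition E n r) :
    ∃ H ⊆ E, IsBiregular H r := by
  obtain ⟨f, hf, hft⟩ := (all_card_le_biUnion_card_iff_existsInjective' (tutteGadget E r)).1
    (card_le_card_biUnion_tutteGadget hB hE)
  exact ⟨gadgetFactor E f, filter_subset _ _, isBiregular_of_le_degLeft_of_degRight_le
    (hA.trans hB.symm) (le_degLeft_gadgetFactor hf hft) (degRight_gadgetFactor_le hf hft)⟩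

lemma exists_pairwise_disjoint_isBiregular_one [Fintype A] [Fintype B]
    (hA : Fintype.card A = n) (hB : Fintype.card B = n) {E : Finset (A × B)}
    (hE : CutCondition E n r) :
    ∃ M : Fin r → Finset (A × B), (∀ i, M i ⊆ E ∧ IsBiregular (M i) 1) ∧
      Pairwise (Disjoint on M) := by
  induction r generalizing E with
  | zero => exact ⟨finZeroElim, finZeroElim, fun i => i.elim0⟩
  | succ r ih =>
    obtain ⟨H, hHE, hH⟩ := exists_subset_isBiregular hA hB hE
    obtain ⟨M₀, hM₀H, hM₀⟩ :=
      exists_subset_isBiregular hA hB ((hH.cutCondition hB).mono (Nat.le_add_left 1 r))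
    obtain ⟨M, hM, hdisj⟩ := ih ((hH.sdiff hM₀ hM₀H).cutCondition hB)
    refine ⟨Fin.cons M₀ M, Fin.cases ⟨hM₀H.trans hHE, hM₀⟩
      fun i => ⟨(hM i).1.trans (sdiff_subset.trans hHE), (hM i).2⟩, ?_⟩
    have hM₀M : ∀ i, Disjoint M₀ (M i) := fun i => disjoint_sdiff.mono_right (hM i).1
    intro i j hij
    induction i using Fin.cases <;> induction j using Fin.cases
    · exact absurd rfl hij
    · exact hM₀M _
    · exact (hM₀M _).symm
    · exact hdisj (fun h => hij (congrArg Fin.succ h))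

end BipartiteFactor

/-- If a bipartite graph `E ⊆ A × B` with `|A| = |B| = n` satisfies
`e(X,Y) ≥ r(|X| + |Y| − n)` for all `X ⊆ A`, `Y ⊆ B`, then it contains `r`
pairwise edge-disjoint perfect matchings. -/
theorem stmt3 {A B : Type*} [Fintype A] [Fintype B] [DecidableEq A] [DecidableEq B]
    (n r : ℕ) (hA : Fintype.card A = n) (hB : Fintype.card B = n)
    (E : Finset (A × B))
    (hGR : ∀ (X : Finset A) (Y : Finset B),
      (r : ℤ) * ((X.card : ℤ) + (Y.card : ℤ) - (n : ℤ)) ≤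
        ((E.filter (fun e => e.1 ∈ X ∧ e.2 ∈ Y)).card : ℤ)) :
    ∃ M : Fin r → Finset (A × B),
      (∀ i, M i ⊆ E ∧
        (∀ a : A, ((M i).filter (fun e => e.1 = a)).card = 1) ∧
        (∀ b : B, ((M i).filter (fun e => e.2 = b)).card = 1)) ∧
      (∀ i j, i ≠ j → Disjoint (M i) (M j)) :=
  BipartiteFactor.exists_pairwise_disjoint_isBiregular_one hA hB hGR
end

section
/- Let k ≥ 2, let α ∈ (0,1], set s = αn and N = kn, and let m_r be the number of elements of [N] appearing exactly r times in s i.i.d. uniform draws from [N]. If r_0 is the smallest positive integer with 2·k^{−r_0} ≤ ε²/2, and α ≥ ε/2, then ∑_{r > r_0} r·E[m_r] ≤ ε·α·n. -/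
open scoped Classical

/-- The expected number of elements of `[N]` occurring with multiplicity exactly `r`
among `s` i.i.d. uniform draws from `[N]`. -/
noncomputable def expMult (N s r : ℕ) : ℝ :=
  (∑ f : Fin s → Fin N,
      ((Finset.univ.filter (fun t : Fin N =>
          (Finset.univ.filter (fun i : Fin s => f i = t)).card = r)).card : ℝ)) / N ^ s

/-!
Weighting the values of multiplicity `r > r₀` by `r` counts draws rather than values:
`∑_{r > r₀} r·m_r` is the number of draws `i` whose value is hit at least `r₀ + 1` times.
For a fixed draw `i` this needs `r₀` other draws to agree with it, which by a union bound over
the `r₀`-sets of other draws has probability at most `C(s-1, r₀) N^{-r₀} ≤ (s/N)^{r₀}`.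
Hence `∑_{r > r₀} r·E[m_r] ≤ s (s/N)^{r₀} ≤ s k^{-r₀} ≤ s ε²/4 ≤ ε α n`, as `s ≤ n`.
-/

open Finset

section Multiplicity

variable {ι β : Type*} [Fintype ι] [Fintype β] [DecidableEq β]

theorem sum_mul_card_filter_card_fiber_eq (f : ι → β) (r₀ : ℕ) :
    ∑ r ∈ Icc (r₀ + 1) (Fintype.card ι), r * #{t | #{i | f i = t} = r}
      = #{i | r₀ + 1 ≤ #{j | f j = f i}} := by
  set m : β → ℕ := fun t => #{i | f i = t}
  calc ∑ r ∈ Icc (r₀ + 1) (Fintype.card ι), r * #{t | m t = r}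
      = ∑ t with r₀ + 1 ≤ m t, m t := by
        rw [← sum_fiberwise_of_maps_to (g := m) (t := Icc (r₀ + 1) (Fintype.card ι))
          (fun t ht => mem_Icc.2 ⟨(mem_filter.1 ht).2, card_le_univ _⟩)]
        refine sum_congr rfl fun r hr => ?_
        rw [sum_congr rfl (fun t ht => (mem_filter.1 ht).2), sum_const, smul_eq_mul, mul_comm,
          filter_filter]
        congr 2
        ext t
        simp only [mem_filter, mem_univ, true_and]
        exact (and_iff_right_of_imp fun h => h ▸ (mem_Icc.1 hr).1).symm
    _ = ∑ t, ∑ i with f i = t, if r₀ + 1 ≤ m (f i) then 1 else 0 := by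
        rw [sum_filter]
        refine sum_congr rfl fun t _ => ?_
        rw [sum_congr rfl fun i hi => by rw [(mem_filter.1 hi).2]]
        simp [m]
    _ = #{i | r₀ + 1 ≤ m (f i)} := by
        rw [sum_fiberwise, card_filter]

variable [DecidableEq ι]

theorem card_filter_forall_mem_eq_le_pow {T : Finset ι} {i : ι} (hi : i ∉ T) :
    #{f : ι → β | ∀ j ∈ T, f j = f i} ≤ Fintype.card β ^ (Fintype.card ι - #T) := by
  have hinj : Set.InjOn (fun (f : ι → β) (j : {j // j ∉ T}) => f j)
      {f : ι → β | ∀ j ∈ T, f j = f i} := by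
    intro f hf g hg hfg
    have hoff : ∀ j ∉ T, f j = g j := fun j hj => congrFun hfg ⟨j, hj⟩
    funext j
    by_cases hj : j ∈ T
    · rw [hf j hj, hg j hj, hoff i hi]
    · exact hoff j hj
  calc #{f : ι → β | ∀ j ∈ T, f j = f i}
      ≤ #(univ : Finset ({j // j ∉ T} → β)) :=
        card_le_card_of_injOn _ (fun _ _ => mem_univ _) (by simpa using hinj)
    _ = Fintype.card β ^ (Fintype.card ι - #T) := by
        simp [Fintype.card_subtype_compl]

theorem card_filter_le_card_fiber_le (i : ι) (r₀ : ℕ) :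
    #{f : ι → β | r₀ + 1 ≤ #{j | f j = f i}}
      ≤ (Fintype.card ι - 1).choose r₀ * Fintype.card β ^ (Fintype.card ι - r₀) := by
  have hcover : ({f : ι → β | r₀ + 1 ≤ #{j | f j = f i}} : Finset (ι → β)) ⊆
      (powersetCard r₀ (univ.erase i)).biUnion fun T => {f : ι → β | ∀ j ∈ T, f j = f i} := by
    intro f hf
    have hr₀ : r₀ ≤ #(({j | f j = f i} : Finset ι).erase i) := by
      have := (mem_filter.1 hf).2
      rw [card_erase_of_mem (by simp)]
      omega
    obtain ⟨T, hT, rfl⟩ := exists_subset_card_eq hr₀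
    refine mem_biUnion.2
      ⟨T, mem_powersetCard.2 ⟨hT.trans (erase_subset_erase _ (subset_univ _)), rfl⟩, ?_⟩
    simpa using fun j hj => (mem_filter.1 (mem_of_mem_erase (hT hj))).2
  calc #{f : ι → β | r₀ + 1 ≤ #{j | f j = f i}}
      ≤ ∑ T ∈ powersetCard r₀ (univ.erase i), #{f : ι → β | ∀ j ∈ T, f j = f i} :=
        (card_le_card hcover).trans card_biUnion_le
    _ ≤ ∑ T ∈ powersetCard r₀ (univ.erase i), Fintype.card β ^ (Fintype.card ι - r₀) := by
        refine sum_le_sum fun T hT => ?_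
        obtain ⟨hTi, hTr⟩ := mem_powersetCard.1 hT
        rw [← hTr]
        have hiT : i ∉ T := fun hi => (mem_erase.1 (hTi hi)).1 rfl
        exact card_filter_forall_mem_eq_le_pow hiT
    _ = (Fintype.card ι - 1).choose r₀ * Fintype.card β ^ (Fintype.card ι - r₀) := by
        rw [sum_const, card_powersetCard, card_erase_of_mem (mem_univ i), card_univ, smul_eq_mul]

theorem sum_mul_sum_card_filter_card_fiber_le (r₀ : ℕ) :
    ∑ r ∈ Icc (r₀ + 1) (Fintype.card ι), r * ∑ f : ι → β, #{t | #{i | f i = t} = r}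
      ≤ Fintype.card ι * ((Fintype.card ι - 1).choose r₀ *
          Fintype.card β ^ (Fintype.card ι - r₀)) := by
  calc ∑ r ∈ Icc (r₀ + 1) (Fintype.card ι), r * ∑ f : ι → β, #{t | #{i | f i = t} = r}
      = ∑ f : ι → β, #{i | r₀ + 1 ≤ #{j | f j = f i}} := by
        simp only [mul_sum]
        rw [sum_comm]
        exact sum_congr rfl fun f _ => sum_mul_card_filter_card_fiber_eq f r₀
    _ = ∑ i, #{f : ι → β | r₀ + 1 ≤ #{j | f j = f i}} := by
        simp only [card_filter]
        exact sum_comm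
    _ ≤ ∑ _i : ι, (Fintype.card ι - 1).choose r₀ * Fintype.card β ^ (Fintype.card ι - r₀) :=
        sum_le_sum fun i _ => card_filter_le_card_fiber_le i r₀
    _ = _ := by rw [sum_const, card_univ, smul_eq_mul]

end Multiplicity

theorem sum_mul_expMult_le {N : ℕ} (hN : 0 < N) (s r₀ : ℕ) :
    ∑ r ∈ Icc (r₀ + 1) s, (r : ℝ) * expMult N s r ≤ s * ((s : ℝ) / N) ^ r₀ := by
  rcases lt_or_ge s (r₀ + 1) with hs | hs
  · rw [Icc_eq_empty (by omega), sum_empty]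
    positivity
  have hcount := sum_mul_sum_card_filter_card_fiber_le (ι := Fin s) (β := Fin N) r₀
  simp only [Fintype.card_fin] at hcount
  have hchoose : (s - 1).choose r₀ ≤ s ^ r₀ :=
    (Nat.choose_le_pow _ _).trans (Nat.pow_le_pow_left (Nat.sub_le s 1) r₀)
  have hNs : (N : ℝ) ^ s = N ^ (s - r₀) * N ^ r₀ := by
    rw [← pow_add, Nat.sub_add_cancel (by omega)]
  calc ∑ r ∈ Icc (r₀ + 1) s, (r : ℝ) * expMult N s r
      = (∑ r ∈ Icc (r₀ + 1) s, r * ∑ f : Fin s → Fin N, #{t | #{i | f i = t} = r} : ℕ)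
          / (N : ℝ) ^ s := by
        push_cast
        simp only [expMult, sum_div, mul_div_assoc]
    _ ≤ (s * (s ^ r₀ * N ^ (s - r₀)) : ℕ) / (N : ℝ) ^ s := by
        gcongr
        exact hcount.trans (Nat.mul_le_mul_left _ (Nat.mul_le_mul_right _ hchoose))
    _ = s * ((s : ℝ) / N) ^ r₀ := by
        rw [hNs, div_pow]
        push_cast
        field_simp

theorem stmt12_general (n k s r0 : ℕ) (hk : 2 ≤ k) (hn : 0 < n) (ε α : ℝ)
    (hε0 : 0 < ε) (hε1 : ε < 1) (hα1 : α ≤ 1)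
    (hs : (s : ℝ) = α * n)
    (hr0 : 2 * (k : ℝ) ^ (-(r0 : ℤ)) ≤ ε ^ 2 / 2) :
    ∑ r ∈ Finset.Icc (r0 + 1) s, (r : ℝ) * expMult (k * n) s r ≤ ε * α * n := by
  have hsn : (s : ℝ) ≤ n := by rw [hs]; exact mul_le_of_le_one_left n.cast_nonneg hα1
  have hsN : (s : ℝ) / (k * n) ≤ (k : ℝ)⁻¹ := by
    rw [div_le_iff₀ (by positivity), inv_mul_cancel_left₀ (by positivity)]
    exact hsn
  have hkr0 : (k : ℝ)⁻¹ ^ r0 ≤ ε ^ 2 / 4 := by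
    rw [inv_pow, ← zpow_natCast, ← zpow_neg]; linarith
  calc ∑ r ∈ Icc (r0 + 1) s, (r : ℝ) * expMult (k * n) s r
      ≤ s * ((s : ℝ) / (k * n)) ^ r0 := by
        exact_mod_cast sum_mul_expMult_le (Nat.mul_pos (by omega) hn) s r0
    _ ≤ s * (ε ^ 2 / 4) := by gcongr; exact hkr0.trans' (by gcongr)
    _ ≤ s * ε := by gcongr; nlinarith
    _ = ε * α * n := by rw [hs]; ring

/-- With `k ≥ 2`, `α ∈ [ε/2, 1]`, `s = αn` i.i.d. uniform draws from `[kn]`, and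
`r₀` the smallest positive integer with `2·k^{−r₀} ≤ ε²/2`, we have
`∑_{r > r₀} r·E[m_r] ≤ ε·α·n`. -/
theorem stmt12 (n k s r0 : ℕ) (hk : 2 ≤ k) (hn : 0 < n) (ε α : ℝ)
    (hε0 : 0 < ε) (hε1 : ε < 1) (hα1 : α ≤ 1) (hαε : ε / 2 ≤ α)
    (hs : (s : ℝ) = α * n)
    (hr0pos : 0 < r0) (hr0 : 2 * (k : ℝ) ^ (-(r0 : ℤ)) ≤ ε ^ 2 / 2)
    (hr0min : ∀ r : ℕ, 0 < r → r < r0 → ¬(2 * (k : ℝ) ^ (-(r : ℤ)) ≤ ε ^ 2 / 2)) :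
    ∑ r ∈ Finset.Icc (r0 + 1) s, (r : ℝ) * expMult (k * n) s r ≤ ε * α * n :=
  stmt12_general n k s r0 hk hn ε α hε0 hε1 hα1 hs hr0
end

section
/- Let P be a monotone increasing graph property, and let Ĝ_{k-out}(G) be the sequential model where vertices, in an order given by a permutation σ, each pick k distinct incident edges uniformly at random among edges of G not previously picked (or all remaining if fewer than k). Then Pr[G_{k-out}(G) ⊨ P] ≤ Pr[Ĝ_{k-out}(G) ⊨ P], where G_{k-out}(G) is the model in which each vertex independently picks k random neighbors. -/
open scoped Classical

variable {V : Type*} [Fintype V] [DecidableEq V]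

/-- The `k`-out process: the vertices in the list each independently pick a uniformly
random `k`-subset of their neighborhood in `G`; the resulting edges are accumulated
(in `picked`). Running it on a list of all vertices yields the edge set of a random
graph distributed as `G_{k-out}(G)`. -/
noncomputable def koutProcess (G : SimpleGraph V) (k : ℕ)
    (hδ : ∀ v : V, k ≤ (G.neighborFinset v).card) :
    List V → Finset (Sym2 V) → PMF (Finset (Sym2 V))
  | [], picked => PMF.pure picked
  | v :: rest, picked =>
      (PMF.uniformOfFinset ((G.neighborFinset v).powersetCard k)
          (Finset.powersetCard_nonempty.mpr (hδ v))) >>= fun S =>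
        koutProcess G k hδ rest (picked ∪ S.image (fun w => s(v, w)))

/-- The sequential model `Ĝ_{k-out}(G)`: the vertices in the list, in order, each
pick `k` distinct incident edges uniformly at random among the edges of `G` not
picked in a previous step (or all remaining incident edges if fewer than `k`). -/
noncomputable def hatKoutProcess (G : SimpleGraph V) (k : ℕ) :
    List V → Finset (Sym2 V) → PMF (Finset (Sym2 V))
  | [], picked => PMF.pure picked
  | v :: rest, picked =>
      (PMF.uniformOfFinset
          ((G.incidenceFinset v \ picked).powersetCard
            (min k (G.incidenceFinset v \ picked).card))
          (Finset.powersetCard_nonempty.mpr (min_le_right _ _))) >>= fun S =>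
        hatKoutProcess G k rest (picked ∪ S)

/-!
The two processes are compared vertex by vertex through a monotone coupling. Suppose the
`k`-out process has picked `A` so far and the sequential one `B ⊇ A`, and let `I` be the set of
edges at the next vertex. The `k`-out step adds a uniform `k`-subset `R` of `I`, the sequential
step a uniform `m`-subset `T` of `I \ B`, where `m = min k |I \ B|`. Choosing `T` uniformly
among the `m`-subsets of `I \ B` that contain `R \ B` couples the two steps: by a Vandermonde
count the resulting `T` is uniform, and `A ∪ R ⊆ B ∪ T` always holds. Induction along the
vertex order then bounds the probability of every up-closed event, for each fixed order; the
`k`-out process does not depend on the order, so averaging over the order gives the theorem.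
-/

open scoped ENNReal
open Finset

theorem ENNReal.sum_mul_le_sum_mul_of_coupling {α β : Type*} {s : Finset α} {t : Finset β}
    (p : α → ℝ≥0∞) (q : β → ℝ≥0∞) (w : α → β → ℝ≥0∞) {F : α → ℝ≥0∞} {G : β → ℝ≥0∞}
    (hw : ∀ a ∈ s, ∑ b ∈ t, w a b = 1) (hq : ∀ b ∈ t, ∑ a ∈ s, p a * w a b = q b)
    (hFG : ∀ a ∈ s, ∀ b ∈ t, w a b ≠ 0 → F a ≤ G b) :
    ∑ a ∈ s, p a * F a ≤ ∑ b ∈ t, q b * G b :=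
  calc ∑ a ∈ s, p a * F a = ∑ a ∈ s, ∑ b ∈ t, p a * w a b * F a := by
        refine sum_congr rfl fun a ha => ?_
        rw [← sum_mul, ← mul_sum, hw a ha, mul_one]
    _ ≤ ∑ a ∈ s, ∑ b ∈ t, p a * w a b * G b := by
        refine sum_le_sum fun a ha => sum_le_sum fun b hb => ?_
        by_cases hab : w a b = 0
        · simp [hab]
        · exact mul_le_mul_right (hFG a ha b hb hab) _
    _ = ∑ b ∈ t, q b * G b := by
        rw [sum_comm]
        exact sum_congr rfl fun b hb => by rw [← sum_mul, hq b hb]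

theorem ENNReal.sum_range_choose_mul_choose_div_choose (M b k : ℕ) :
    ∑ j ∈ range (min k M + 1),
        ((min k M).choose j * b.choose (k - j) : ℝ≥0∞) / (M - j).choose (min k M - j)
      = (M + b).choose k / M.choose (min k M) := by
  set m := min k M
  have term : ∀ j ∈ range (m + 1),
      (m.choose j * b.choose (k - j) : ℝ≥0∞) / (M - j).choose (m - j)
        = (M.choose j * b.choose (k - j) : ℝ≥0∞) / M.choose m := by
    intro j hj
    have hjm : j ≤ m := Nat.lt_succ_iff.1 (mem_range.1 hj)
    rw [ENNReal.div_eq_div_iff (by exact_mod_cast (Nat.choose_pos (min_le_right k M)).ne')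
      (ENNReal.natCast_ne_top _)
      (by exact_mod_cast (Nat.choose_pos (Nat.sub_le_sub_right (min_le_right k M) j)).ne')
      (ENNReal.natCast_ne_top _)]
    have key : M.choose m * (m.choose j * b.choose (k - j))
        = (M - j).choose (m - j) * (M.choose j * b.choose (k - j)) := by
      rw [← mul_assoc, Nat.choose_mul hjm]
      ring
    exact_mod_cast key
  rw [sum_congr rfl term]
  simp only [div_eq_mul_inv, ← sum_mul]
  congr 1
  have vandermonde :
      ∑ j ∈ range (k + 1), M.choose j * b.choose (k - j) = (M + b).choose k := by
    rw [Nat.add_choose_eq, Nat.sum_antidiagonal_eq_sum_range_succ_mk]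
  rw [← vandermonde]
  push_cast
  -- the terms with `min k M < j ≤ k` vanish, because then `M < j`
  refine sum_subset (range_subset_range.2 (by omega)) fun j hjk hjm => ?_
  rw [mem_range] at hjk hjm
  rw [Nat.choose_eq_zero_of_lt (by omega : M < j)]
  simp

namespace Finset

variable {α : Type*} [DecidableEq α]

theorem filter_powersetCard_sdiff_eq {I B D : Finset α} (k : ℕ) (hDI : D ⊆ I)
    (hDB : Disjoint D B) :
    {R ∈ I.powersetCard k | R \ B = D} = {R ∈ (D ∪ I ∩ B).powersetCard k | D ⊆ R} := by
  ext R
  simp only [mem_filter, mem_powersetCard, Finset.ext_iff, subset_iff, mem_sdiff, mem_union,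
    mem_inter]
  rw [disjoint_left] at hDB
  grind

theorem card_filter_powersetCard_sdiff_eq {I B D : Finset α} {k : ℕ} (hDI : D ⊆ I)
    (hDB : Disjoint D B) (hDk : #D ≤ k) :
    #{R ∈ I.powersetCard k | R \ B = D} = (#(I ∩ B)).choose (k - #D) := by
  rw [filter_powersetCard_sdiff_eq k hDI hDB,
    card_filter_powersetCard_subset _ _ _ subset_union_left hDk,
    card_union_of_disjoint (hDB.mono_right inter_subset_right), Nat.add_sub_cancel_left]

theorem sum_filter_powersetCard_sdiff_subset_inv_choose {I B T : Finset α} {k : ℕ}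
    (hT : T ∈ (I \ B).powersetCard (min k #(I \ B))) :
    ∑ R ∈ I.powersetCard k with R \ B ⊆ T,
        (((#(I \ B) - #(R \ B)).choose (min k #(I \ B) - #(R \ B)) : ℝ≥0∞))⁻¹
      = (#I).choose k / (#(I \ B)).choose (min k #(I \ B)) := by
  obtain ⟨hTIB, hTm⟩ := mem_powersetCard.1 hT
  set m := min k #(I \ B)
  set f : ℕ → ℝ≥0∞ := fun j => (((#(I \ B) - j).choose (m - j) : ℝ≥0∞))⁻¹
  have fiber : ∀ D ∈ T.powerset,
      ∑ R ∈ {R ∈ I.powersetCard k | R \ B ⊆ T} with R \ B = D, f #(R \ B)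
        = (#(I ∩ B)).choose (k - #D) * f #D := by
    intro D hD
    have hDT := mem_powerset.1 hD
    have hDIB := hDT.trans hTIB
    rw [filter_filter, filter_congr fun R _ => ⟨And.right, fun h => ⟨h ▸ hDT, h⟩⟩,
      sum_congr rfl fun R hR => by rw [(mem_filter.1 hR).2], sum_const, nsmul_eq_mul,
      card_filter_powersetCard_sdiff_eq (hDIB.trans sdiff_subset)
        (disjoint_of_subset_left hDIB sdiff_disjoint)
        ((card_le_card hDT).trans (hTm ▸ min_le_left _ _))]
  rw [← sum_fiberwise_of_maps_to (g := (· \ B)) (t := T.powerset)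
      fun R hR => mem_powerset.2 (mem_filter.1 hR).2, sum_congr rfl fiber,
    sum_powerset_apply_card (fun j => (#(I ∩ B)).choose (k - j) * f j), hTm,
    ← card_sdiff_add_card_inter I B, ← ENNReal.sum_range_choose_mul_choose_div_choose]
  refine sum_congr rfl fun j _ => ?_
  simp only [f, m, nsmul_eq_mul, div_eq_mul_inv, mul_assoc]

end Finset

namespace PMF

theorem le_toOuterMeasure_bind {α β : Type*} (p : PMF α) (f : α → PMF β) {s : Set β}
    {x : ℝ≥0∞} (h : ∀ a, x ≤ (f a).toOuterMeasure s) : x ≤ (p.bind f).toOuterMeasure s := by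
  rw [toOuterMeasure_bind_apply]
  calc x = ∑' a, p a * x := by rw [ENNReal.tsum_mul_right, tsum_coe, one_mul]
    _ ≤ ∑' a, p a * (f a).toOuterMeasure s :=
      ENNReal.tsum_le_tsum fun a => mul_le_mul_right (h a) _

theorem map_uniformOfFinset {α β : Type*} {s : Finset α} (hs : s.Nonempty) (e : α ↪ β) :
    (uniformOfFinset s hs).map e = uniformOfFinset (s.map e) hs.map := by
  ext b
  rw [map_apply, uniformOfFinset_apply, card_map]
  by_cases hb : b ∈ s.map e
  · obtain ⟨a, ha, rfl⟩ := mem_map.1 hb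
    rw [tsum_eq_single a fun a' ha' => by simp [e.injective.eq_iff, Ne.symm ha']]
    simp [ha]
  · rw [if_neg hb]
    refine ENNReal.tsum_eq_zero.2 fun a => ?_
    split_ifs with h
    · exact uniformOfFinset_apply_of_notMem hs fun ha => hb (h ▸ mem_map_of_mem e ha)
    · rfl

theorem toOuterMeasure_uniformOfFinset_bind_apply {α β : Type*} {s : Finset α}
    (hs : s.Nonempty) (f : α → PMF β) (U : Set β) :
    ((uniformOfFinset s hs).bind f).toOuterMeasure U
      = ∑ a ∈ s, (#s : ℝ≥0∞)⁻¹ * (f a).toOuterMeasure U := by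
  rw [toOuterMeasure_bind_apply,
    tsum_eq_sum fun a ha => by rw [uniformOfFinset_apply_of_notMem hs ha, zero_mul]]
  exact sum_congr rfl fun a ha => by rw [uniformOfFinset_apply_of_mem hs ha]

theorem toOuterMeasure_uniformOfFinset_powersetCard_bind_le {α β : Type*} [DecidableEq α]
    {I B : Finset α} {k : ℕ} (hk : k ≤ #I) (f g : Finset α → PMF β) (U : Set β)
    (hfg : ∀ R ∈ I.powersetCard k, ∀ T ∈ (I \ B).powersetCard (min k #(I \ B)),
      R \ B ⊆ T → (f R).toOuterMeasure U ≤ (g T).toOuterMeasure U) :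
    ((uniformOfFinset (I.powersetCard k) (powersetCard_nonempty.2 hk)).bind f).toOuterMeasure U
      ≤ ((uniformOfFinset ((I \ B).powersetCard (min k #(I \ B)))
          (powersetCard_nonempty.2 (min_le_right _ _))).bind g).toOuterMeasure U := by
  set m := min k #(I \ B)
  rw [toOuterMeasure_uniformOfFinset_bind_apply, toOuterMeasure_uniformOfFinset_bind_apply,
    card_powersetCard, card_powersetCard]
  -- `R` spreads its mass evenly over the `m`-subsets of `I \ B` containing `R \ B`
  refine ENNReal.sum_mul_le_sum_mul_of_coupling _ _
    (fun R T => if R \ B ⊆ T then (((#(I \ B) - #(R \ B)).choose (m - #(R \ B)) : ℝ≥0∞))⁻¹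
      else 0)
    (fun R hR => ?_) (fun T hT => ?_)
    (fun R hR T hT hRT => hfg R hR T hT (by by_contra h; simp [h] at hRT))
  · obtain ⟨hRI, hRk⟩ := mem_powersetCard.1 hR
    have hRB : R \ B ⊆ I \ B := sdiff_subset_sdiff hRI subset_rfl
    rw [← sum_filter, sum_const, card_filter_powersetCard_subset _ _ _ hRB
      (le_min ((card_le_card sdiff_subset).trans hRk.le) (card_le_card hRB)), nsmul_eq_mul]
    exact ENNReal.mul_inv_cancel
      (by exact_mod_cast (Nat.choose_pos (Nat.sub_le_sub_right (min_le_right _ _) _)).ne')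
      (ENNReal.natCast_ne_top _)
  · rw [← mul_sum, ← sum_filter, sum_filter_powersetCard_sdiff_subset_inv_choose hT,
      div_eq_mul_inv, ← mul_assoc, ENNReal.inv_mul_cancel
        (by exact_mod_cast (Nat.choose_pos hk).ne') (ENNReal.natCast_ne_top _), one_mul]

end PMF

theorem SimpleGraph.map_neighborFinset_mkEmbedding {W : Type*} (G : SimpleGraph W) (v : W)
    [Fintype (G.neighborSet v)] [DecidableEq W] :
    (G.neighborFinset v).map (Sym2.mkEmbedding v) = G.incidenceFinset v := by
  ext e
  simp only [mem_map, mem_neighborFinset, Sym2.mkEmbedding_apply, mem_incidenceFinset]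
  constructor
  · rintro ⟨w, hw, rfl⟩
    exact (G.mem_incidenceSet v w).2 hw
  · intro he
    obtain ⟨w, rfl⟩ := Sym2.mem_iff_exists.1 he.2
    exact ⟨w, (G.mem_incidenceSet v w).1 he, rfl⟩

theorem koutProcess_cons (G : SimpleGraph V) (k : ℕ)
    (hδ : ∀ v : V, k ≤ (G.neighborFinset v).card) (v : V) (rest : List V)
    (A : Finset (Sym2 V)) :
    koutProcess G k hδ (v :: rest) A
      = (PMF.uniformOfFinset ((G.incidenceFinset v).powersetCard k) (powersetCard_nonempty.2
          (G.card_incidenceFinset_eq_degree v ▸ hδ v))).bind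
          fun R => koutProcess G k hδ rest (A ∪ R) := by
  have hmap : ((G.neighborFinset v).powersetCard k).map
      (mapEmbedding (Sym2.mkEmbedding v)).toEmbedding = (G.incidenceFinset v).powersetCard k := by
    rw [← powersetCard_map, G.map_neighborFinset_mkEmbedding]
  rw [koutProcess]
  calc
    _ = ((PMF.uniformOfFinset ((G.neighborFinset v).powersetCard k)
          (powersetCard_nonempty.2 (hδ v))).map
            (mapEmbedding (Sym2.mkEmbedding v)).toEmbedding).bind
        (fun R => koutProcess G k hδ rest (A ∪ R)) := by
      rw [PMF.bind_map]
      refine congrArg (PMF.bind _) (funext fun S => ?_)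
      simp only [RelEmbedding.coe_toEmbedding, Function.comp_apply, mapEmbedding_apply,
        map_eq_image]
      rfl
    _ = _ := by
      simp only [PMF.map_uniformOfFinset, hmap]

theorem koutProcess_perm (G : SimpleGraph V) (k : ℕ)
    (hδ : ∀ v : V, k ≤ (G.neighborFinset v).card) {l₁ l₂ : List V} (h : l₁.Perm l₂)
    (A : Finset (Sym2 V)) : koutProcess G k hδ l₁ A = koutProcess G k hδ l₂ A := by
  induction h generalizing A with
  | nil => rfl
  | cons v _ ih => simp only [koutProcess, ih]
  | swap v w l =>
    show PMF.bind _ (fun _ => PMF.bind _ _) = PMF.bind _ (fun _ => PMF.bind _ _)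
    rw [PMF.bind_comm]
    simp only [union_right_comm]
  | trans _ _ ih₁ ih₂ => exact (ih₁ A).trans (ih₂ A)

theorem koutProcess_le_hatKoutProcess (G : SimpleGraph V) (k : ℕ)
    (hδ : ∀ v : V, k ≤ (G.neighborFinset v).card) {U : Set (Finset (Sym2 V))} (hU : IsUpperSet U)
    (l : List V) {A B : Finset (Sym2 V)} (hAB : A ⊆ B) :
    (koutProcess G k hδ l A).toOuterMeasure U ≤ (hatKoutProcess G k l B).toOuterMeasure U := by
  induction l generalizing A B with
  | nil =>
    simp only [koutProcess, hatKoutProcess, PMF.toOuterMeasure_pure_apply]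
    by_cases hA : A ∈ U
    · simp [hA, hU hAB hA]
    · simp [hA]
  | cons v rest ih =>
    rw [koutProcess_cons, hatKoutProcess]
    exact PMF.toOuterMeasure_uniformOfFinset_powersetCard_bind_le
      (G.card_incidenceFinset_eq_degree v ▸ hδ v) _ _ _
      fun R _ T _ hRT => ih (union_subset (hAB.trans subset_union_left) (sdiff_le_iff.1 hRT))

theorem stmt18_general (G : SimpleGraph V) (k : ℕ)
    (hδ : ∀ v : V, k ≤ (G.neighborFinset v).card)
    (P : SimpleGraph V → Prop)
    (hmono : ∀ G₁ G₂ : SimpleGraph V, G₁ ≤ G₂ → P G₁ → P G₂) :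
    (koutProcess G k hδ Finset.univ.toList ∅).toOuterMeasure
        {E : Finset (Sym2 V) | P (SimpleGraph.fromEdgeSet ↑E)}
      ≤ ((PMF.uniformOfFintype (Equiv.Perm V)) >>= fun σ =>
            hatKoutProcess G k (Finset.univ.toList.map σ) ∅).toOuterMeasure
        {E : Finset (Sym2 V) | P (SimpleGraph.fromEdgeSet ↑E)} := by
  have hU : IsUpperSet {E : Finset (Sym2 V) | P (SimpleGraph.fromEdgeSet ↑E)} :=
    fun A B hAB hA => hmono _ _ (SimpleGraph.fromEdgeSet_mono (coe_subset.2 hAB)) hA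
  refine PMF.le_toOuterMeasure_bind _ _ fun σ => ?_
  have hperm : (Finset.univ.toList : List V).Perm (Finset.univ.toList.map σ) :=
    List.perm_of_nodup_nodup_toFinset_eq (nodup_toList _) ((nodup_toList _).map σ.injective)
      (by ext a; simpa using ⟨σ.symm a, by simp⟩)
  rw [koutProcess_perm G k hδ hperm]
  exact koutProcess_le_hatKoutProcess G k hδ hU _ subset_rfl

/-- For every monotone increasing graph property `P`, the probability that
`G_{k-out}(G)` satisfies `P` is at most the probability that the sequential model
`Ĝ_{k-out}(G)` (run with a uniformly random order of the vertices) satisfies `P`. -/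
theorem stmt18 [Nonempty V] (G : SimpleGraph V) (k : ℕ)
    (hδ : ∀ v : V, k ≤ (G.neighborFinset v).card)
    (P : SimpleGraph V → Prop)
    (hmono : ∀ G₁ G₂ : SimpleGraph V, G₁ ≤ G₂ → P G₁ → P G₂) :
    (koutProcess G k hδ Finset.univ.toList ∅).toOuterMeasure
        {E : Finset (Sym2 V) | P (SimpleGraph.fromEdgeSet ↑E)}
      ≤ ((PMF.uniformOfFintype (Equiv.Perm V)) >>= fun σ =>
            hatKoutProcess G k (Finset.univ.toList.map σ) ∅).toOuterMeasure
        {E : Finset (Sym2 V) | P (SimpleGraph.fromEdgeSet ↑E)} :=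
  stmt18_general G k hδ P hmono
end
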